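/- There exist finite sets C, D ⊆ 𝔽₂^20 such that: every element of C has Hamming weight exactly 8; any two distinct elements of C have Hamming distance at least 8; |C| = 130; any two distinct elements of D have Hamming distance at least 5; |D| = 2048; and every d ∈ D satisfies Σᵢ dᵢcᵢ = 0 in 𝔽₂ for every c ∈ C. -/

import Mathlib

/-!
Both codes are linear, given by generators written as 20-bit masks. `D` is spanned by eleven
words and is a `[20, 11, 5]` code (the extended Golay code shortened once and punctured three
times); `C` is the set of weight-8 words of the `[20, 8, 8]` subcode spanned by the first eight
of them (the Golay code shortened four times), i.e. the
`759 - 4 * 253 + 6 * 77 - 4 * 21 + 5 = 130` octads avoiding four points. For a linear code the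
minimum distance is the least nonzero weight, distinct messages give distinct codewords as soon
as that weight is positive, and orthogonality only has to be checked on generators, so
everything reduces to a computation over the `2 ^ 11` messages.
-/

open Finset

namespace BinaryCode

def ofBits (n a : ℕ) : Fin n → ZMod 2 := fun i => if a.testBit i then 1 else 0

def weight (n a : ℕ) : ℕ := #{i : Fin n | a.testBit i}

def encode : List ℕ → ℕ → ℕ
  | [], _ => 0
  | g :: gs, m => (if m.testBit 0 then g else 0) ^^^ encode gs (m >>> 1)

abbrev LeMinWeight (n : ℕ) (gs : List ℕ) (d : ℕ) : Prop :=
  ∀ m < 2 ^ gs.length, m ≠ 0 → d ≤ weight n (encode gs m)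

def codewords (n : ℕ) (gs : List ℕ) : Finset (Fin n → ZMod 2) :=
  (range (2 ^ gs.length)).image fun m => ofBits n (encode gs m)

variable {n : ℕ}

@[simp]
theorem ofBits_zero : ofBits n 0 = 0 := by
  ext i; simp [ofBits]

theorem ofBits_xor (a b : ℕ) : ofBits n (a ^^^ b) = ofBits n a + ofBits n b := by
  ext i
  simp only [ofBits, Nat.testBit_xor, Pi.add_apply]
  cases a.testBit i <;> cases b.testBit i <;> decide

theorem hammingNorm_ofBits (a : ℕ) : hammingNorm (ofBits n a) = weight n a := by
  unfold hammingNorm weight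
  congr 1
  ext i
  by_cases h : a.testBit i <;> simp [ofBits, h]

theorem hammingDist_ofBits (a b : ℕ) :
    hammingDist (ofBits n a) (ofBits n b) = weight n (a ^^^ b) := by
  have hneg : -ofBits n a = ofBits n a := funext fun i => ZMod.neg_eq_self_mod_two _
  rw [hammingDist_eq_hammingNorm, hneg, ← ofBits_xor, hammingNorm_ofBits]

theorem dotProduct_ofBits (a b : ℕ) :
    ofBits n a ⬝ᵥ ofBits n b = (weight n (a &&& b) : ZMod 2) := by
  have h (i : Fin n) : ofBits n a i * ofBits n b i = if (a &&& b).testBit i then 1 else 0 := by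
    simp only [ofBits, Nat.testBit_and]
    cases a.testBit i <;> cases b.testBit i <;> simp
  simp only [dotProduct, h, sum_boole, weight]

theorem encode_xor (gs : List ℕ) (a b : ℕ) :
    encode gs (a ^^^ b) = encode gs a ^^^ encode gs b := by
  induction gs generalizing a b with
  | nil => simp [encode]
  | cons g gs ih =>
    have hshift : (a ^^^ b) >>> 1 = a >>> 1 ^^^ b >>> 1 :=
      Nat.eq_of_testBit_eq fun i => by simp
    simp only [encode, hshift, ih, Nat.testBit_xor]
    cases a.testBit 0 <;> cases b.testBit 0 <;> simp [Nat.xor_left_comm, Nat.xor_comm]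

variable {d : ℕ} {gs : List ℕ}

theorem le_hammingDist_ofBits_encode
    (h : LeMinWeight n gs d)
    {m m' : ℕ} (hm : m < 2 ^ gs.length) (hm' : m' < 2 ^ gs.length) (hne : m ≠ m') :
    d ≤ hammingDist (ofBits n (encode gs m)) (ofBits n (encode gs m')) := by
  rw [hammingDist_ofBits, ← encode_xor]
  exact h _ (Nat.xor_lt_two_pow hm hm') (by simpa [xor_eq_zero_iff] using hne)

theorem dotProduct_ofBits_encode_eq_zero {v : Fin n → ZMod 2}
    (h : ∀ g ∈ gs, ofBits n g ⬝ᵥ v = 0) (m : ℕ) : ofBits n (encode gs m) ⬝ᵥ v = 0 := by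
  induction gs generalizing m with
  | nil => simp [encode]
  | cons g gs ih =>
    rw [encode, ofBits_xor, add_dotProduct, ih (fun g' hg' => h g' (by simp [hg']))]
    split_ifs <;> simp [h]

theorem le_hammingDist_of_mem_codewords
    (h : LeMinWeight n gs d)
    {c c' : Fin n → ZMod 2} (hc : c ∈ codewords n gs) (hc' : c' ∈ codewords n gs)
    (hne : c ≠ c') : d ≤ hammingDist c c' := by
  obtain ⟨m, hm, rfl⟩ := mem_image.1 hc
  obtain ⟨m', hm', rfl⟩ := mem_image.1 hc'
  exact le_hammingDist_ofBits_encode h (mem_range.1 hm) (mem_range.1 hm')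
    (by rintro rfl; exact hne rfl)

theorem injOn_ofBits_encode (hd : 0 < d)
    (h : LeMinWeight n gs d) :
    Set.InjOn (fun m => ofBits n (encode gs m)) (range (2 ^ gs.length)) := by
  intro m hm m' hm' heq
  by_contra hne
  have := le_hammingDist_ofBits_encode h (mem_range.1 hm) (mem_range.1 hm') hne
  simp only [heq, hammingDist_self] at this
  omega

theorem card_codewords (hd : 0 < d)
    (h : LeMinWeight n gs d) :
    #(codewords n gs) = 2 ^ gs.length := by
  rw [codewords, card_image_of_injOn (injOn_ofBits_encode hd h), card_range]

theorem card_filter_codewords (hd : 0 < d)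
    (h : LeMinWeight n gs d)
    (p : (Fin n → ZMod 2) → Prop) [DecidablePred p] :
    #{c ∈ codewords n gs | p c} =
      #{m ∈ range (2 ^ gs.length) | p (ofBits n (encode gs m))} := by
  rw [codewords, filter_image,
    card_image_of_injOn ((injOn_ofBits_encode hd h).mono (filter_subset _ _))]

theorem dotProduct_eq_zero_of_mem_codewords {hs : List ℕ}
    (h : ∀ g ∈ gs, ∀ g' ∈ hs, Even (weight n (g &&& g')))
    {c c' : Fin n → ZMod 2} (hc : c ∈ codewords n gs) (hc' : c' ∈ codewords n hs) :
    c ⬝ᵥ c' = 0 := by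
  obtain ⟨m, -, rfl⟩ := mem_image.1 hc
  obtain ⟨m', -, rfl⟩ := mem_image.1 hc'
  refine dotProduct_ofBits_encode_eq_zero (fun g hg => ?_) m
  rw [dotProduct_comm]
  refine dotProduct_ofBits_encode_eq_zero (fun g' hg' => ?_) m'
  rw [dotProduct_comm, dotProduct_ofBits, ZMod.natCast_eq_zero_iff_even]
  exact h g hg g' hg'

end BinaryCode

open BinaryCode

def gensC : List ℕ := [6143, 12002, 19909, 35723, 69398, 134701, 265307, 526519]

def gensD : List ℕ := gensC ++ [2414, 2780, 3512]

theorem leMinWeight_gensC : LeMinWeight 20 gensC 8 := by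
  decide +kernel

theorem leMinWeight_gensD : LeMinWeight 20 gensD 5 := by
  decide +kernel

theorem card_weight_eight_gensC :
    #{m ∈ range (2 ^ gensC.length) | weight 20 (encode gensC m) = 8} = 130 := by
  decide +kernel

theorem even_weight_and_gensD_gensC :
    ∀ g ∈ gensD, ∀ g' ∈ gensC, Even (weight 20 (g &&& g')) := by
  decide

theorem exists_codes_dim20 :
    ∃ C D : Finset (Fin 20 → ZMod 2),
      (∀ c ∈ C, hammingNorm c = 8) ∧
      (∀ c ∈ C, ∀ c' ∈ C, c ≠ c' → 8 ≤ hammingDist c c') ∧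
      C.card = 130 ∧
      (∀ d ∈ D, ∀ d' ∈ D, d ≠ d' → 5 ≤ hammingDist d d') ∧
      D.card = 2048 ∧
      (∀ d ∈ D, ∀ c ∈ C, (∑ i : Fin 20, d i * c i) = 0) := by
  refine ⟨{c ∈ codewords 20 gensC | hammingNorm c = 8}, codewords 20 gensD,
    fun c hc => (mem_filter.1 hc).2,
    fun c hc c' hc' => le_hammingDist_of_mem_codewords leMinWeight_gensC
      (mem_filter.1 hc).1 (mem_filter.1 hc').1, ?_,
    fun d hd d' hd' => le_hammingDist_of_mem_codewords leMinWeight_gensD hd hd',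
    card_codewords (by norm_num) leMinWeight_gensD,
    fun d hd c hc => dotProduct_eq_zero_of_mem_codewords even_weight_and_gensD_gensC hd
      (mem_filter.1 hc).1⟩
  rw [card_filter_codewords (by norm_num) leMinWeight_gensC]
  simpa only [hammingNorm_ofBits] using card_weight_eight_gensC
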